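/- arXiv:1308.1710 — 3 statements merged into one kernel-verified Lean document; each statement's English description precedes it below -/
import Mathlib

section
/- Let K₁ ≥ 1 and let A be an invertible real 3×3 matrix (equivalently, an invertible linear map A : ℝ³ → ℝ³) such that ‖Av‖ ≤ K₁‖Aw‖ for all unit vectors v, w ∈ ℝ³. Then for every orthogonal projection P of ℝ³ onto a 2-dimensional linear subspace, |det A|^{2/3} ≤ K₁² ‖P ∘ A‖_F², where ‖P ∘ A‖_F² is the squared Frobenius (Hilbert–Schmidt) norm of the composition P ∘ A. -/
/-!
The preimage under `A` of the plane `U` is at least 2-dimensional, so some unit vector `v` has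
`A v ∈ U`, whence `‖A v‖ = ‖P A v‖ ≤ ‖P A‖_F`. Hadamard's inequality and the distortion bound give
`|det A| ≤ ∏ ‖A e_j‖ ≤ (K₁ ‖A v‖)³`, and taking the `2/3`-power combines the two.
-/

open Module

theorem OrthonormalBasis.abs_det_le_prod_norm {E : Type*} [NormedAddCommGroup E]
    [InnerProductSpace ℝ E] {n : ℕ} (b : OrthonormalBasis (Fin n) ℝ E) (v : Fin n → E) :
    |b.toBasis.det v| ≤ ∏ i, ‖v i‖ := by
  have : Fact (finrank ℝ E = n) := ⟨by simpa using finrank_eq_card_basis b.toBasis⟩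
  rw [← b.toBasis.orientation.volumeForm_robust' b]
  exact b.toBasis.orientation.abs_volumeForm_apply_le v

theorem Matrix.abs_det_le_prod_norm_col {n : ℕ} (A : Matrix (Fin n) (Fin n) ℝ) :
    |A.det| ≤ ∏ j, ‖Matrix.toEuclideanLin A (EuclideanSpace.single j 1)‖ := by
  convert (EuclideanSpace.basisFun (Fin n) ℝ).abs_det_le_prod_norm _
  rw [Basis.det_apply]
  congr 1
  ext i j
  simp [Basis.toMatrix_apply, Matrix.mulVec_single]

theorem Submodule.finrank_add_finrank_le_finrank_comap_add {K V W : Type*} [DivisionRing K]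
    [AddCommGroup V] [Module K V] [AddCommGroup W] [Module K W] [FiniteDimensional K V]
    [FiniteDimensional K W] (f : V →ₗ[K] W) (U : Submodule K W) :
    finrank K V + finrank K U ≤ finrank K (U.comap f) + finrank K W := by
  have hker : LinearMap.ker (U.mkQ ∘ₗ f) = U.comap f := by
    rw [LinearMap.ker_comp, Submodule.ker_mkQ]
  have hrange := Submodule.finrank_le (LinearMap.range (U.mkQ ∘ₗ f))
  have hrank_nullity := LinearMap.finrank_range_add_finrank_ker (U.mkQ ∘ₗ f)
  have hquot := U.finrank_quotient_add_finrank
  rw [hker] at hrank_nullity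
  omega

theorem exists_norm_eq_one_apply_mem {E F : Type*} [NormedAddCommGroup E] [NormedSpace ℝ E]
    [AddCommGroup F] [Module ℝ F] [FiniteDimensional ℝ E] [FiniteDimensional ℝ F]
    (f : E →ₗ[ℝ] F) (U : Submodule ℝ F) (hU : finrank ℝ F < finrank ℝ E + finrank ℝ U) :
    ∃ v : E, ‖v‖ = 1 ∧ f v ∈ U := by
  have hpos : 0 < finrank ℝ (U.comap f) := by
    have := U.finrank_add_finrank_le_finrank_comap_add f
    omega
  obtain ⟨x, hx, hx0⟩ :=
    Submodule.exists_mem_ne_zero_of_ne_bot (Submodule.one_le_finrank_iff.mp hpos)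
  refine ⟨‖x‖⁻¹ • x, norm_smul_inv_norm hx0, ?_⟩
  rw [map_smul]
  exact U.smul_mem _ hx

theorem OrthonormalBasis.norm_sq_apply_le_mul_sum_norm_sq {ι E F : Type*} [Fintype ι]
    [NormedAddCommGroup E] [InnerProductSpace ℝ E] [SeminormedAddCommGroup F] [NormedSpace ℝ F]
    (b : OrthonormalBasis ι ℝ E) (T : E →ₗ[ℝ] F) (v : E) :
    ‖T v‖ ^ 2 ≤ ‖v‖ ^ 2 * ∑ i, ‖T (b i)‖ ^ 2 := by
  have hexp : T v = ∑ i, b.repr v i • T (b i) := by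
    conv_lhs => rw [← b.sum_repr v]
    simp [map_sum]
  have hnorm : ‖v‖ ^ 2 = ∑ i, |b.repr v i| ^ 2 := by
    rw [← b.repr.norm_map, EuclideanSpace.norm_sq_eq]
    simp
  calc ‖T v‖ ^ 2 ≤ (∑ i, |b.repr v i| * ‖T (b i)‖) ^ 2 := by
        gcongr
        rw [hexp]
        refine (norm_sum_le _ _).trans_eq ?_
        simp [norm_smul]
    _ ≤ ‖v‖ ^ 2 * ∑ i, ‖T (b i)‖ ^ 2 := hnorm ▸ Finset.sum_mul_sq_le_sq_mul_sq _ _ _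

open Matrix in
theorem stmt12_general (K₁ : ℝ) (A : Matrix (Fin 3) (Fin 3) ℝ)
    (hdist : ∀ v w : EuclideanSpace ℝ (Fin 3), ‖v‖ = 1 → ‖w‖ = 1 →
      ‖Matrix.toEuclideanLin A v‖ ≤ K₁ * ‖Matrix.toEuclideanLin A w‖)
    (U : Submodule ℝ (EuclideanSpace ℝ (Fin 3))) (hU : Module.finrank ℝ U = 2) :
    |A.det| ^ ((2 : ℝ) / 3)
      ≤ K₁ ^ 2 * ∑ j : Fin 3,
          ‖(Submodule.orthogonalProjection U (Matrix.toEuclideanLin A (EuclideanSpace.single j 1))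
              : EuclideanSpace ℝ (Fin 3))‖ ^ 2 := by
  set f := Matrix.toEuclideanLin A
  obtain ⟨v, hv, hvU⟩ := exists_norm_eq_one_apply_mem f U (by simp [hU])
  have hK : 0 ≤ K₁ * ‖f v‖ := (norm_nonneg _).trans (hdist v v hv hv)
  have hdet : |A.det| ≤ (K₁ * ‖f v‖) ^ 3 :=
    calc |A.det| ≤ ∏ j, ‖f (EuclideanSpace.single j 1)‖ := A.abs_det_le_prod_norm_col
      _ ≤ ∏ _j : Fin 3, K₁ * ‖f v‖ :=
        Finset.prod_le_prod (fun _ _ => norm_nonneg _) fun j _ => hdist _ v (by simp) hv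
      _ = (K₁ * ‖f v‖) ^ 3 := by simp
  have hproj : ‖f v‖ ^ 2 ≤ ∑ j, ‖U.starProjection (f (EuclideanSpace.single j 1))‖ ^ 2 := by
    simpa [hv, Submodule.starProjection_eq_self_iff.mpr hvU] using
      (EuclideanSpace.basisFun (Fin 3) ℝ).norm_sq_apply_le_mul_sum_norm_sq
        (U.starProjection.toLinearMap ∘ₗ f) v
  calc |A.det| ^ ((2 : ℝ) / 3) ≤ ((K₁ * ‖f v‖) ^ 3) ^ ((2 : ℝ) / 3) := by gcongr
    _ = K₁ ^ 2 * ‖f v‖ ^ 2 := by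
      rw [← Real.rpow_natCast, ← Real.rpow_mul hK]
      norm_num [mul_pow]
    _ ≤ _ := mul_le_mul_of_nonneg_left hproj (sq_nonneg K₁)

open Matrix in
/-- if the invertible 3×3 matrix A has distortion bounded by K₁, then for
every orthogonal projection P onto a 2-dimensional subspace U of ℝ³,
|det A|^{2/3} ≤ K₁² ‖P ∘ A‖_F², where ‖P∘A‖_F² = Σ_j ‖P(A e_j)‖² is the squared
Frobenius norm of P ∘ A. -/
theorem stmt12 (K₁ : ℝ) (hK : 1 ≤ K₁) (A : Matrix (Fin 3) (Fin 3) ℝ) (hA : A.det ≠ 0)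
    (hdist : ∀ v w : EuclideanSpace ℝ (Fin 3), ‖v‖ = 1 → ‖w‖ = 1 →
      ‖Matrix.toEuclideanLin A v‖ ≤ K₁ * ‖Matrix.toEuclideanLin A w‖)
    (U : Submodule ℝ (EuclideanSpace ℝ (Fin 3))) (hU : Module.finrank ℝ U = 2) :
    |A.det| ^ ((2 : ℝ) / 3)
      ≤ K₁ ^ 2 * ∑ j : Fin 3,
          ‖(Submodule.orthogonalProjection U (Matrix.toEuclideanLin A (EuclideanSpace.single j 1))
              : EuclideanSpace ℝ (Fin 3))‖ ^ 2 :=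
  stmt12_general K₁ A hdist U hU
end

section
/- Let n ≥ 3 and ω = exp(2πi/n). Suppose f : S¹ → S¹ is a homeomorphism of the unit circle in ℂ such that f(1) = 1 and f(ωz) = ω f(z) for every z ∈ S¹. Then |f(z) − z| ≤ |ω − 1| for every z ∈ S¹. In particular, if for each n the map f_n : S¹ → S¹ is a homeomorphism fixing 1 and commuting with the rotation z ↦ exp(2πi/n)z, then f_n converges uniformly to the identity map of S¹ as n → ∞. -/
/-!
Put `ω = exp (i t)` with `t = 2π/n`. The powers of `ω` are fixed by `f`, so by injectivity the
image of the open arc from `1` to `ω` is a connected subset of the circle avoiding them.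
Continuity of `f` at `1` and at `ω` forces this image to come close to both endpoints, which for
`n ≥ 3` is only possible if it lies in the same arc. Every `z` on the circle is `ωᵏ u` with `u` on
the closed arc, so `|f z - z| = |f u - u|` is at most the chord `|ω - 1|` spanning that arc; and
`|ω - 1| ≤ 2π/n` gives the uniform convergence.
-/

open Complex Set Metric
open scoped Real

/-- The argument of `z` normalized to `(0, 2π]`, continuous off the ray `[0, ∞)`. -/
noncomputable def argIoc (z : ℂ) : ℝ := π + arg (-z)

lemma argIoc_mem_Ioc (z : ℂ) : argIoc z ∈ Ioc 0 (2 * π) := by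
  obtain ⟨h₁, h₂⟩ := arg_mem_Ioc (-z)
  exact ⟨by unfold argIoc; linarith, by unfold argIoc; linarith⟩

lemma exp_argIoc_mul_I {z : ℂ} (hz : ‖z‖ = 1) : exp (argIoc z * I) = z := by
  have h := norm_mul_exp_arg_mul_I (-z)
  rw [norm_neg, hz, ofReal_one, one_mul] at h
  rw [argIoc, ofReal_add, add_mul, exp_add, h, exp_pi_mul_I]
  ring

lemma argIoc_exp_mul_I {a : ℝ} (ha : a ∈ Ioc 0 (2 * π)) : argIoc (exp (a * I)) = a := by
  have h : -exp (a * I) = exp (↑(a - π) * I) := by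
    rw [ofReal_sub, sub_mul, exp_sub, exp_pi_mul_I]
    ring
  rw [argIoc, h, arg_exp_mul_I, (toIocMod_eq_self _).2 ⟨by linarith [ha.1], by linarith [ha.2]⟩]
  ring

lemma neg_mem_slitPlane_of_norm_eq_one {z : ℂ} (hz : ‖z‖ = 1) (h1 : z ≠ 1) :
    -z ∈ slitPlane := by
  refine mem_slitPlane_iff_arg.2 ⟨fun hπ => h1 ?_, neg_ne_zero.2 (by rintro rfl; simp at hz)⟩
  have h := norm_mul_exp_arg_mul_I (-z)
  rw [hπ, norm_neg, hz, exp_pi_mul_I, ofReal_one] at h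
  linear_combination h

lemma argIoc_one : argIoc 1 = 2 * π := by
  rw [argIoc, arg_neg_one]
  ring

lemma argIoc_lt_two_pi {z : ℂ} (hz : ‖z‖ = 1) (h1 : z ≠ 1) : argIoc z < 2 * π := by
  have := (arg_le_pi (-z)).lt_of_ne (slitPlane_arg_ne_pi (neg_mem_slitPlane_of_norm_eq_one hz h1))
  unfold argIoc
  linarith

lemma continuousAt_argIoc {z : ℂ} (hz : ‖z‖ = 1) (h1 : z ≠ 1) : ContinuousAt argIoc z :=
  continuousAt_const.add
    ((continuousAt_arg (neg_mem_slitPlane_of_norm_eq_one hz h1)).comp continuousAt_neg)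

lemma norm_exp_mul_I_sub_one_sq (x : ℝ) : ‖exp (x * I) - 1‖ ^ 2 = 2 - 2 * Real.cos x := by
  rw [Complex.sq_norm, normSq_apply, sub_re, sub_im, exp_ofReal_mul_I_re, exp_ofReal_mul_I_im,
    one_re, one_im]
  nlinarith [Real.sin_sq_add_cos_sq x]

lemma norm_exp_mul_I_sub_one_le_iff {x y : ℝ} :
    ‖exp (x * I) - 1‖ ≤ ‖exp (y * I) - 1‖ ↔ Real.cos y ≤ Real.cos x := by
  rw [← sq_le_sq₀ (norm_nonneg _) (norm_nonneg _), norm_exp_mul_I_sub_one_sq,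
    norm_exp_mul_I_sub_one_sq]
  constructor <;> intro h <;> linarith

lemma norm_exp_mul_I_sub_one_pos {t : ℝ} (ht0 : 0 < t) (ht : t < 2 * π) :
    0 < ‖exp (t * I) - 1‖ := by
  refine norm_pos_iff.2 (sub_ne_zero.2 fun h => ?_)
  have := congrArg argIoc h
  rw [argIoc_exp_mul_I ⟨ht0, ht.le⟩, argIoc_one] at this
  exact ht.ne this

lemma norm_exp_mul_I_sub_exp_mul_I (a b : ℝ) :
    ‖exp (a * I) - exp (b * I)‖ = ‖exp (↑(a - b) * I) - 1‖ := by
  rw [← one_mul ‖exp (↑(a - b) * I) - 1‖, ← norm_exp_ofReal_mul_I b, ← norm_mul, mul_sub, mul_one,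
    ← exp_add]
  push_cast
  ring_nf

lemma Real.cos_le_cos_of_abs_le {x t : ℝ} (h : |x| ≤ t) (ht : t ≤ π) :
    Real.cos t ≤ Real.cos x := by
  rw [← Real.cos_abs x]
  exact Real.cos_le_cos_of_nonneg_of_le_pi (abs_nonneg x) ht h

lemma Real.cos_le_cos_of_mem_Icc {x t : ℝ} (ht : 0 ≤ t) (hx : x ∈ Icc t (2 * π - t)) :
    Real.cos x ≤ Real.cos t := by
  rcases le_total x π with hxπ | hπx
  · exact Real.cos_le_cos_of_nonneg_of_le_pi ht hxπ hx.1
  · rw [← Real.cos_two_pi_sub]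
    exact Real.cos_le_cos_of_nonneg_of_le_pi ht (by linarith) (by linarith [hx.2])

lemma IsPreconnected.lt_of_mem_of_notMem {s : Set ℝ} (hs : IsPreconnected s) {a b c : ℝ}
    (ha : a ∈ s) (hac : a < c) (hc : c ∉ s) (hb : b ∈ s) : b < c := by
  by_contra! h
  exact hc (hs.Icc_subset ha hb ⟨hac.le, h⟩)

lemma IsPreconnected.subset_Iio {s : Set ℝ} (hs : IsPreconnected s) {a b c d : ℝ}
    (hc : c ∉ s) (hd : d ∉ s) (ha : a ∈ s) (hac : a < c ∨ d < a) (hb : b ∈ s) (hbd : b < d) :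
    s ⊆ Iio c := fun _ hx =>
  hs.lt_of_mem_of_notMem ha (hac.resolve_right (hs.lt_of_mem_of_notMem hb hbd hd ha).not_gt) hc hx

theorem map_pow_mul_of_map_mul {M : Type*} [Monoid M] {S : Set M} {f : M → M} {ω : M}
    (hS : MapsTo (ω * ·) S S) (hf : ∀ z ∈ S, f (ω * z) = ω * f z) (k : ℕ) :
    ∀ z ∈ S, f (ω ^ k * z) = ω ^ k * f z := by
  induction k with
  | zero => simp
  | succ k ih =>
    intro z hz
    rw [pow_succ, mul_assoc, ih _ (hS hz), hf z hz, mul_assoc]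

lemma exists_pow_mul_exp_mul_I {t : ℝ} (ht : 0 < t) {z : ℂ} (hz : ‖z‖ = 1) :
    ∃ k : ℕ, ∃ a ∈ Ico 0 t, exp (t * I) ^ k * exp (a * I) = z := by
  set θ := argIoc z
  have hθ : 0 ≤ θ / t := div_nonneg (argIoc_mem_Ioc z).1.le ht.le
  refine ⟨⌊θ / t⌋₊, θ - ⌊θ / t⌋₊ * t, ⟨?_, ?_⟩, ?_⟩
  · linarith [(le_div_iff₀ ht).1 (Nat.floor_le hθ)]
  · linarith [(div_lt_iff₀ ht).1 (Nat.lt_floor_add_one (θ / t))]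
  · rw [← exp_nat_mul, ← exp_add, ← exp_argIoc_mul_I hz]
    congr 1
    push_cast
    ring

lemma exp_ofReal_mul_I_mem_sphere (a : ℝ) : exp (a * I) ∈ sphere (0 : ℂ) 1 :=
  mem_sphere_zero_iff_norm.2 (norm_exp_ofReal_mul_I a)

def openArc (t : ℝ) : Set ℂ := (fun a : ℝ => exp (a * I)) '' Ioo 0 t

lemma openArc_subset_sphere (t : ℝ) : openArc t ⊆ sphere 0 1 := by
  rintro _ ⟨a, -, rfl⟩
  exact exp_ofReal_mul_I_mem_sphere a

lemma isPreconnected_openArc (t : ℝ) : IsPreconnected (openArc t) :=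
  isPreconnected_Ioo.image _ (by fun_prop : Continuous fun a : ℝ => exp (a * I)).continuousOn

lemma exp_mul_I_mem_closure_openArc {t a : ℝ} (ht : 0 < t) (ha : a ∈ Icc 0 t) :
    exp (a * I) ∈ closure (openArc t) :=
  mem_closure_image (by fun_prop) (by rwa [closure_Ioo ht.ne])

lemma lt_or_lt_of_norm_exp_mul_I_sub_one_lt {x t : ℝ} (ht : 0 ≤ t)
    (h : ‖exp (x * I) - 1‖ < ‖exp (t * I) - 1‖) : x < t ∨ 2 * π - t < x := by
  by_contra! hx
  exact (norm_exp_mul_I_sub_one_le_iff.2 (Real.cos_le_cos_of_mem_Icc ht hx)).not_gt h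

section EquivariantCircleMap

variable {t : ℝ} {f : ℂ → ℂ}
  (hf1 : f 1 = 1) (hf : ∀ z ∈ sphere (0 : ℂ) 1, f (exp (t * I) * z) = exp (t * I) * f z)
include hf1 hf

lemma apply_exp_mul_I_eq_self (b : ℝ) (hb : b ∈ ({t, 2 * π - t, 2 * π} : Set ℝ)) :
    f (exp (b * I)) = exp (b * I) := by
  rcases hb with rfl | rfl | rfl
  · simpa [hf1] using hf 1 (by simp)
  · have hinv : exp (t * I) * exp (↑(2 * π - t) * I) = 1 := by
      rw [← exp_add, ← exp_two_pi_mul_I]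
      push_cast
      ring_nf
    have h := hf _ (exp_ofReal_mul_I_mem_sphere (2 * π - t))
    rw [hinv, hf1] at h
    exact mul_left_cancel₀ (exp_ne_zero _) (h.symm.trans hinv.symm)
  · push_cast
    rw [exp_two_pi_mul_I, hf1]

lemma notMem_argIoc_image_openArc (ht0 : 0 < t) (ht : t ≤ π) (hinj : InjOn f (sphere 0 1))
    (hmaps : MapsTo f (sphere 0 1) (sphere 0 1)) {b : ℝ}
    (hb : b ∈ ({t, 2 * π - t, 2 * π} : Set ℝ)) : b ∉ argIoc '' (f '' openArc t) := by
  rintro ⟨_, ⟨_, ⟨a, ha, rfl⟩, rfl⟩, hab⟩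
  have hbI : b ∈ Ioc 0 (2 * π) := by
    rcases hb with rfl | rfl | rfl <;> constructor <;> linarith [Real.pi_pos]
  have hexp : exp (a * I) = exp (b * I) := by
    refine hinj (exp_ofReal_mul_I_mem_sphere a) (exp_ofReal_mul_I_mem_sphere b) ?_
    rw [apply_exp_mul_I_eq_self hf1 hf b hb, ← hab,
      exp_argIoc_mul_I (mem_sphere_zero_iff_norm.1 (hmaps (exp_ofReal_mul_I_mem_sphere a)))]
  have := congrArg argIoc hexp
  rw [argIoc_exp_mul_I ⟨ha.1, by linarith [ha.2]⟩, argIoc_exp_mul_I hbI] at this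
  rcases hb with rfl | rfl | rfl <;> linarith [ha.2]

theorem mapsTo_openArc (ht0 : 0 < t) (ht : 3 * t ≤ 2 * π) (hinj : InjOn f (sphere 0 1))
    (hmaps : MapsTo f (sphere 0 1) (sphere 0 1)) (hcont : ContinuousOn f (sphere 0 1)) :
    MapsTo f (openArc t) (openArc t) := by
  set D := f '' openArc t
  have hD_norm : ∀ w ∈ D, ‖w‖ = 1 := fun w hw =>
    mem_sphere_zero_iff_norm.1 ((hmaps.mono_left (openArc_subset_sphere t)).image_subset hw)
  have hB_ne : ∀ b ∈ ({t, 2 * π - t, 2 * π} : Set ℝ), b ∉ argIoc '' D :=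
    fun b hb => notMem_argIoc_image_openArc hf1 hf ht0 (by linarith) hinj hmaps hb
  have hD_one : ∀ w ∈ D, w ≠ 1 := by
    rintro w hw rfl
    exact hB_ne (2 * π) (by simp) ⟨1, hw, argIoc_one⟩
  have hB : IsPreconnected (argIoc '' D) :=
    ((isPreconnected_openArc t).image f (hcont.mono (openArc_subset_sphere t))).image argIoc
      fun w hw => (continuousAt_argIoc (hD_norm w hw) (hD_one w hw)).continuousWithinAt
  have hε := norm_exp_mul_I_sub_one_pos ht0 (by linarith)
  have hnear : ∀ x ∈ closure (openArc t), f x = x → ∃ w ∈ D, ‖w - x‖ < ‖exp (t * I) - 1‖ := by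
    intro x hx hfx
    have hxS : x ∈ sphere 0 1 := closure_minimal (openArc_subset_sphere t) isClosed_sphere hx
    have hxD := ((hcont x hxS).mono (openArc_subset_sphere t)).mem_closure_image hx
    rw [hfx] at hxD
    obtain ⟨w, hw, hxw⟩ := Metric.mem_closure_iff.1 hxD _ hε
    exact ⟨w, hw, by rwa [dist_comm, dist_eq_norm] at hxw⟩
  obtain ⟨w₁, hw₁, h₁⟩ := hnear 1
    (by simpa using exp_mul_I_mem_closure_openArc ht0 (a := 0) ⟨le_rfl, ht0.le⟩) hf1
  obtain ⟨w₂, hw₂, h₂⟩ := hnear _ (exp_mul_I_mem_closure_openArc ht0 ⟨ht0.le, le_rfl⟩)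
    (apply_exp_mul_I_eq_self hf1 hf t (by simp))
  have hw₁' : argIoc w₁ < t ∨ 2 * π - t < argIoc w₁ := by
    refine lt_or_lt_of_norm_exp_mul_I_sub_one_lt ht0.le ?_
    rwa [exp_argIoc_mul_I (hD_norm w₁ hw₁)]
  have hw₂' : argIoc w₂ < 2 * t := by
    have h := lt_or_lt_of_norm_exp_mul_I_sub_one_lt (x := argIoc w₂ - t) ht0.le
      (by rwa [← norm_exp_mul_I_sub_exp_mul_I, exp_argIoc_mul_I (hD_norm w₂ hw₂)])
    have := argIoc_lt_two_pi (hD_norm w₂ hw₂) (hD_one w₂ hw₂)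
    rcases h with h | h <;> linarith
  -- `w₂` lies below `2 * t ≤ 2 * π - t`, which is where `3 * t ≤ 2 * π` enters
  have hB_lt : argIoc '' D ⊆ Iio t :=
    hB.subset_Iio (hB_ne t (by simp)) (hB_ne (2 * π - t) (by simp)) (mem_image_of_mem _ hw₁) hw₁'
      (mem_image_of_mem _ hw₂) (by linarith)
  intro x hx
  have hw : f x ∈ D := mem_image_of_mem f hx
  exact ⟨argIoc (f x), ⟨(argIoc_mem_Ioc _).1, hB_lt (mem_image_of_mem _ hw)⟩,
    exp_argIoc_mul_I (hD_norm _ hw)⟩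

theorem norm_apply_sub_self_le (ht0 : 0 < t) (ht : 3 * t ≤ 2 * π) (hinj : InjOn f (sphere 0 1))
    (hmaps : MapsTo f (sphere 0 1) (sphere 0 1)) (hcont : ContinuousOn f (sphere 0 1))
    {z : ℂ} (hz : z ∈ sphere 0 1) : ‖f z - z‖ ≤ ‖exp (t * I) - 1‖ := by
  obtain ⟨k, a, ha, rfl⟩ := exists_pow_mul_exp_mul_I ht0 (mem_sphere_zero_iff_norm.1 hz)
  obtain ⟨b, hb, hfb⟩ : ∃ b ∈ Icc 0 t, f (exp (a * I)) = exp (b * I) := by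
    rcases ha.1.eq_or_lt with rfl | ha0
    · exact ⟨0, ⟨le_rfl, ht0.le⟩, by simp [hf1]⟩
    · obtain ⟨b, hb, hfb⟩ := mapsTo_openArc hf1 hf ht0 ht hinj hmaps hcont ⟨a, ⟨ha0, ha.2⟩, rfl⟩
      exact ⟨b, Ioo_subset_Icc_self hb, hfb.symm⟩
  have hrot : MapsTo (exp (t * I) * ·) (sphere (0 : ℂ) 1) (sphere 0 1) := fun z hz => by
    simp_all [norm_exp_ofReal_mul_I]
  rw [map_pow_mul_of_map_mul hrot hf k _ (exp_ofReal_mul_I_mem_sphere a), hfb, ← mul_sub,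
    norm_mul, norm_pow, norm_exp_ofReal_mul_I, one_pow, one_mul, norm_exp_mul_I_sub_exp_mul_I,
    norm_exp_mul_I_sub_one_le_iff]
  refine Real.cos_le_cos_of_abs_le (abs_sub_le_iff.2 ⟨?_, ?_⟩) (by linarith) <;>
    linarith [hb.1, hb.2, ha.1, ha.2]

end EquivariantCircleMap

lemma two_pi_mul_I_div_natCast (n : ℕ) : 2 * π * I / n = ↑(2 * π / n) * I := by
  push_cast
  ring

lemma norm_exp_two_pi_mul_I_div_sub_one_le (n : ℕ) : ‖exp (2 * π * I / n) - 1‖ ≤ 2 * π / n := by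
  rw [two_pi_mul_I_div_natCast, mul_comm]
  exact Real.norm_exp_I_mul_ofReal_sub_one_le.trans_eq (Real.norm_of_nonneg (by positivity))

theorem norm_apply_sub_self_le_of_three_le {n : ℕ} (hn : 3 ≤ n) {f : ℂ → ℂ}
    (hinj : InjOn f (sphere 0 1)) (hmaps : MapsTo f (sphere 0 1) (sphere 0 1))
    (hcont : ContinuousOn f (sphere 0 1)) (hf1 : f 1 = 1)
    (hf : ∀ z ∈ sphere (0 : ℂ) 1, f (exp (2 * π * I / n) * z) = exp (2 * π * I / n) * f z)
    {z : ℂ} (hz : z ∈ sphere 0 1) : ‖f z - z‖ ≤ ‖exp (2 * π * I / n) - 1‖ := by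
  have hn' : (3 : ℝ) ≤ n := by exact_mod_cast hn
  rw [two_pi_mul_I_div_natCast] at hf ⊢
  refine norm_apply_sub_self_le hf1 hf (by positivity) ?_ hinj hmaps hcont hz
  rw [mul_div_assoc', div_le_iff₀ (by positivity)]
  nlinarith [Real.pi_pos]

/-- if n ≥ 3, ω = exp(2πi/n), and f is a homeomorphism of the unit circle
S¹ ⊂ ℂ (i.e. a continuous bijection of the compact set S¹ onto itself) with f(1) = 1 and
f(ωz) = ω f(z) for all z ∈ S¹, then |f(z) − z| ≤ |ω − 1| on S¹. In particular, a sequence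
fₙ of such homeomorphisms (fixing 1, commuting with the rotation by exp(2πi/n)) converges
uniformly on S¹ to the identity as n → ∞. -/
theorem stmt13 :
    (∀ n : ℕ, 3 ≤ n → ∀ f : ℂ → ℂ,
      Set.BijOn f (Metric.sphere (0 : ℂ) 1) (Metric.sphere (0 : ℂ) 1) →
      ContinuousOn f (Metric.sphere (0 : ℂ) 1) →
      f 1 = 1 →
      (∀ z ∈ Metric.sphere (0 : ℂ) 1,
        f (Complex.exp (2 * Real.pi * Complex.I / n) * z)
          = Complex.exp (2 * Real.pi * Complex.I / n) * f z) →
      ∀ z ∈ Metric.sphere (0 : ℂ) 1,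
        ‖f z - z‖ ≤ ‖Complex.exp (2 * Real.pi * Complex.I / n) - 1‖) ∧
    (∀ F : ℕ → ℂ → ℂ,
      (∀ n : ℕ, 3 ≤ n →
        Set.BijOn (F n) (Metric.sphere (0 : ℂ) 1) (Metric.sphere (0 : ℂ) 1) ∧
        ContinuousOn (F n) (Metric.sphere (0 : ℂ) 1) ∧
        F n 1 = 1 ∧
        (∀ z ∈ Metric.sphere (0 : ℂ) 1,
          F n (Complex.exp (2 * Real.pi * Complex.I / n) * z)
            = Complex.exp (2 * Real.pi * Complex.I / n) * F n z)) →
      TendstoUniformlyOn (fun n => F n) id Filter.atTop (Metric.sphere (0 : ℂ) 1)) := by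
  refine ⟨fun n hn f hbij hcont hf1 hf z hz =>
    norm_apply_sub_self_le_of_three_le hn hbij.injOn hbij.mapsTo hcont hf1 hf hz, fun F hF => ?_⟩
  refine Metric.tendstoUniformlyOn_iff.2 fun ε hε => ?_
  filter_upwards [Filter.eventually_ge_atTop 3,
    (tendsto_const_div_atTop_nhds_zero_nat (2 * π)).eventually (gt_mem_nhds hε)] with n hn hnε z hz
  obtain ⟨hbij, hcont, hf1, hf⟩ := hF n hn
  rw [id, dist_comm, dist_eq_norm]
  exact ((norm_apply_sub_self_le_of_three_le hn hbij.injOn hbij.mapsTo hcont hf1 hf hz).trans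
    (norm_exp_two_pi_mul_I_div_sub_one_le n)).trans_lt hnε
end

section
/- Let K ≥ 1, C > 0, and let f : ℝ² → ℝ² be a continuous map satisfying |f(y)| ≤ C|y|^K for all |y| > 1. For x ∈ ℝ² and t > 0 define E(f)(x,t) = ∫_{ℝ²} f(x + ty) φ(y) dy. Let S : ℝ² → ℝ² be a similarity, S(y) = cRy + b with c > 0, R ∈ O(2) an orthogonal linear map, and b ∈ ℝ². Then for every x ∈ ℝ² and t > 0, E(f ∘ S)(x, t) = E(f)(S(x), ct). -/
noncomputable section

open MeasureTheory

/-- The Euclidean plane ℝ². -/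
abbrev E2 : Type := EuclideanSpace ℝ (Fin 2)

/-- The Gaussian kernel φ(y) = (2π)⁻¹ exp(−|y|²/2) on ℝ². -/
def gaussK (y : E2) : ℝ := (2 * Real.pi)⁻¹ * Real.exp (-‖y‖ ^ 2 / 2)

/-- The first (horizontal) coordinate of the good extension:
E(f)(x,t) = ∫_{ℝ²} f(x + ty) φ(y) dy. -/
def goodExt (f : E2 → E2) (x : E2) (t : ℝ) : E2 :=
  ∫ y : E2, gaussK y • f (x + t • y)

/-- conformal naturality: if f : ℝ² → ℝ² is continuous with
|f(y)| ≤ C|y|^K for |y| > 1, and S(y) = cRy + b is a similarity (c > 0, R ∈ O(2), b ∈ ℝ²),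
then E(f ∘ S)(x, t) = E(f)(S(x), ct) for every x ∈ ℝ² and t > 0. -/
theorem stmt16 (K C : ℝ) (hK : 1 ≤ K) (hC : 0 < C)
    (f : E2 → E2) (hf : Continuous f)
    (hgrow : ∀ y : E2, 1 < ‖y‖ → ‖f y‖ ≤ C * ‖y‖ ^ K)
    (c : ℝ) (hc : 0 < c) (R : E2 ≃ₗᵢ[ℝ] E2) (b : E2)
    (S : E2 → E2) (hS : S = fun z => c • R z + b)
    (x : E2) (t : ℝ) (ht : 0 < t) :
    goodExt (f ∘ S) x t = goodExt f (S x) (c * t) := by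
  have key : ∀ y : E2, S (x + t • y) = S x + (c * t) • R y := by
    intro y
    simp only [hS, map_add, _root_.map_smul, smul_smul]
    module
  have h1 : goodExt (f ∘ S) x t = ∫ y : E2, gaussK (R y) • f (S x + (c * t) • R y) := by
    unfold goodExt
    congr 1
    ext y
    rw [Function.comp_apply, key, gaussK, gaussK, R.norm_map]
  rw [h1]
  have := (R.measurePreserving).integral_comp
    R.toHomeomorph.measurableEmbedding
    (fun z : E2 => gaussK z • f (S x + (c * t) • z))
  rw [this]
  rfl
end
end
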